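/- If r_1 ⋯ r_k = w in a reflection group W with each r_i a reflection and k = codim ker(w − 1), then ker(w − 1) = ⋂_{i=1}^k ker(r_i − 1). -/

import Mathlib

open Module

lemma aux_list_prod_fixed {V : Type*} [AddCommGroup V] [Module ℂ V]
    (x : V) : ∀ l : List (V →ₗ[ℂ] V), (∀ f ∈ l, f x = x) → l.prod x = x := by
  intro l
  induction l with
  | nil => intro _; simp
  | cons f t ih =>
      intro h
      rw [List.prod_cons, Module.End.mul_apply, ih (fun g hg => h g (List.mem_cons_of_mem _ hg)),
        h f (List.mem_cons_self)]

lemma aux_finrank_iInf {V : Type*} [AddCommGroup V] [Module ℂ V] [FiniteDimensional ℂ V] :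
    ∀ (k : ℕ) (p : Fin k → Submodule ℂ V),
      (∀ i, Module.finrank ℂ V ≤ Module.finrank ℂ (p i) + 1) →
      Module.finrank ℂ V ≤ Module.finrank ℂ ↥(⨅ i, p i) + k := by
  intro k
  induction k with
  | zero =>
      intro p _
      rw [show (⨅ i, p i) = ⊤ from iInf_of_empty p, finrank_top]; omega
  | succ k ih =>
      intro p h
      set q : Fin k → Submodule ℂ V := fun i => p i.succ with hq
      have step := ih q (fun i => h i.succ)
      have heq : (⨅ i, p i) = p 0 ⊓ ⨅ i, q i := by
        apply le_antisymm
        · exact le_inf (iInf_le _ 0) (le_iInf fun i => iInf_le _ i.succ)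
        · refine le_iInf fun i => ?_
          refine Fin.cases ?_ (fun j => ?_) i
          · exact inf_le_left
          · exact le_trans inf_le_right (iInf_le _ j)
      have hsum := Submodule.finrank_sup_add_finrank_inf_eq (p 0) (⨅ i, q i)
      have hle : Module.finrank ℂ ↥(p 0 ⊔ ⨅ i, q i) ≤ Module.finrank ℂ V :=
        Submodule.finrank_le _
      have h0 := h 0
      rw [heq]
      omega

/-- If `w = r_1 ⋯ r_k` with each `r_i` a reflection (fixed space a hyperplane) and
`k = codim ker(w − 1)`, then `ker(w − 1) = ⋂ ker(r_i − 1)`. -/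
theorem fixed_space_of_reduced_reflection_factorization
    {V : Type*} [AddCommGroup V] [Module ℂ V] [FiniteDimensional ℂ V]
    (k : ℕ) (r : Fin k → (V →ₗ[ℂ] V))
    (hunit : ∀ i, IsUnit (r i))
    (hrefl : ∀ i, Module.finrank ℂ (LinearMap.ker (r i - LinearMap.id)) =
      Module.finrank ℂ V - 1)
    (w : V →ₗ[ℂ] V) (hw : w = (List.ofFn r).prod)
    (hk : Module.finrank ℂ V - Module.finrank ℂ (LinearMap.ker (w - LinearMap.id)) = k) :
    LinearMap.ker (w - LinearMap.id) = ⨅ i, LinearMap.ker (r i - LinearMap.id) := by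
  have hsub : (⨅ i, LinearMap.ker (r i - LinearMap.id)) ≤ LinearMap.ker (w - LinearMap.id) := by
    intro x hx
    simp only [Submodule.mem_iInf, LinearMap.mem_ker, LinearMap.sub_apply, LinearMap.id_apply,
      sub_eq_zero] at hx ⊢
    rw [hw]
    apply aux_list_prod_fixed
    intro f hf
    obtain ⟨i, rfl⟩ := List.mem_ofFn.mp hf
    exact hx i
  have hdim : Module.finrank ℂ V ≤
      Module.finrank ℂ ↥(⨅ i, LinearMap.ker (r i - LinearMap.id)) + k :=
    aux_finrank_iInf k _ (fun i => by rw [hrefl i]; omega)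
  have hker_le : Module.finrank ℂ (LinearMap.ker (w - LinearMap.id)) ≤ Module.finrank ℂ V :=
    Submodule.finrank_le _
  exact (Submodule.eq_of_le_of_finrank_le hsub (by omega)).symm
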